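/- Let η be a positive regular-XPath node expression and let Σ_n^η be the (finite) set of data values mentioned in η. Let G be a data-graph with n nodes, and let A be a set of n data values disjoint from Σ_n^η. If some data-graph H (equal to G up to its data function) satisfies η at every node, then there is a data-graph H' equal to G up to its data function, using only data values from Σ_n^η ∪ A, that satisfies η at every node. More precisely: given H, let c_1,…,c_k enumerate the data values occurring in H but not in Σ_n^η, let d_1,…,d_k be distinct elements of A, and define H' by replacing each occurrence of c_i by d_i; then for every node expression (resp. path expression) sub-formula of η, its semantics in H equals its semantics in H'. -/
import Mathlib


/-- A data-graph: a set of nodes (natural numbers), a set of labeled directed edges,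
and a data function assigning a data value to each node. -/
structure DataGraph (σe σn : Type) where
  V : Set ℕ
  E : Set (ℕ × σe × ℕ)
  D : ℕ → σn

/- Syntax of the positive fragment of regular XPath (GXPath-pos): path expressions and
node expressions, without path complement or node negation. -/
mutual
inductive PathExpr (σe σn : Type) where
  | eps : PathExpr σe σn
  | label : σe → PathExpr σe σn
  | inv : σe → PathExpr σe σn
  | test : NodeExpr σe σn → PathExpr σe σn
  | concat : PathExpr σe σn → PathExpr σe σn → PathExpr σe σn
  | union : PathExpr σe σn → PathExpr σe σn → PathExpr σe σn
  | inter : PathExpr σe σn → PathExpr σe σn → PathExpr σe σn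
  | star : PathExpr σe σn → PathExpr σe σn

inductive NodeExpr (σe σn : Type) where
  | eq : σn → NodeExpr σe σn
  | ne : σn → NodeExpr σe σn
  | and : NodeExpr σe σn → NodeExpr σe σn → NodeExpr σe σn
  | or : NodeExpr σe σn → NodeExpr σe σn → NodeExpr σe σn
  | ex : PathExpr σe σn → NodeExpr σe σn
  | exEq : PathExpr σe σn → PathExpr σe σn → NodeExpr σe σn
  | exNe : PathExpr σe σn → PathExpr σe σn → NodeExpr σe σn
end

/- Semantics of GXPath-pos over a data-graph. -/
mutual
def pathSem {σe σn : Type} (G : DataGraph σe σn) : PathExpr σe σn → ℕ → ℕ → Prop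
  | .eps, v, w => v = w ∧ v ∈ G.V
  | .label a, v, w => (v, a, w) ∈ G.E
  | .inv a, v, w => (w, a, v) ∈ G.E
  | .test ν, v, w => v = w ∧ nodeSem G ν v
  | .concat α β, v, w => ∃ u, pathSem G α v u ∧ pathSem G β u w
  | .union α β, v, w => pathSem G α v w ∨ pathSem G β v w
  | .inter α β, v, w => pathSem G α v w ∧ pathSem G β v w
  | .star α, v, w => v ∈ G.V ∧ w ∈ G.V ∧
      Relation.ReflTransGen (fun x y => pathSem G α x y) v w

def nodeSem {σe σn : Type} (G : DataGraph σe σn) : NodeExpr σe σn → ℕ → Prop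
  | .eq c, v => v ∈ G.V ∧ G.D v = c
  | .ne c, v => v ∈ G.V ∧ G.D v ≠ c
  | .and ν ν', v => nodeSem G ν v ∧ nodeSem G ν' v
  | .or ν ν', v => nodeSem G ν v ∨ nodeSem G ν' v
  | .ex α, v => ∃ w, pathSem G α v w
  | .exEq α β, v => ∃ w u, pathSem G α v w ∧ pathSem G β v u ∧ G.D w = G.D u
  | .exNe α β, v => ∃ w u, pathSem G α v w ∧ pathSem G β v u ∧ G.D w ≠ G.D u
end
/- The set of data values mentioned in an expression. -/
mutual
def mentionedP {σe σn : Type} : PathExpr σe σn → Set σn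
  | .eps => ∅
  | .label _ => ∅
  | .inv _ => ∅
  | .test ν => mentionedN ν
  | .concat α β => mentionedP α ∪ mentionedP β
  | .union α β => mentionedP α ∪ mentionedP β
  | .inter α β => mentionedP α ∪ mentionedP β
  | .star α => mentionedP α

def mentionedN {σe σn : Type} : NodeExpr σe σn → Set σn
  | .eq c => {c}
  | .ne c => {c}
  | .and ν ν' => mentionedN ν ∪ mentionedN ν'
  | .or ν ν' => mentionedN ν ∪ mentionedN ν'
  | .ex α => mentionedP α
  | .exEq α β => mentionedP α ∪ mentionedP β
  | .exNe α β => mentionedP α ∪ mentionedP β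
end

mutual
theorem memP {σe σn : Type} (G : DataGraph σe σn)
    (hwf : ∀ e ∈ G.E, e.1 ∈ G.V ∧ e.2.2 ∈ G.V) :
    ∀ (α : PathExpr σe σn) (v w : ℕ), pathSem G α v w → v ∈ G.V ∧ w ∈ G.V
  | .eps, v, w, h => by
      simp only [pathSem] at h; obtain ⟨rfl, hv⟩ := h; exact ⟨hv, hv⟩
  | .label a, v, w, h => ⟨(hwf _ h).1, (hwf _ h).2⟩
  | .inv a, v, w, h => ⟨(hwf _ h).2, (hwf _ h).1⟩
  | .test ν, v, w, h => by
      simp only [pathSem] at h; obtain ⟨rfl, hv⟩ := h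
      exact ⟨memN G hwf ν v hv, memN G hwf ν v hv⟩
  | .concat α β, v, w, h => by
      simp only [pathSem] at h; obtain ⟨u, h1, h2⟩ := h
      exact ⟨(memP G hwf α v u h1).1, (memP G hwf β u w h2).2⟩
  | .union α β, v, w, h => by
      simp only [pathSem] at h
      exact h.elim (memP G hwf α v w) (memP G hwf β v w)
  | .inter α β, v, w, h => by
      simp only [pathSem] at h; exact memP G hwf α v w h.1
  | .star α, v, w, h => by
      simp only [pathSem] at h; exact ⟨h.1, h.2.1⟩

theorem memN {σe σn : Type} (G : DataGraph σe σn)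
    (hwf : ∀ e ∈ G.E, e.1 ∈ G.V ∧ e.2.2 ∈ G.V) :
    ∀ (ν : NodeExpr σe σn) (v : ℕ), nodeSem G ν v → v ∈ G.V
  | .eq c, v, h => h.1
  | .ne c, v, h => h.1
  | .and ν ν', v, h => by simp only [nodeSem] at h; exact memN G hwf ν v h.1
  | .or ν ν', v, h => by
      simp only [nodeSem] at h
      exact h.elim (memN G hwf ν v) (memN G hwf ν' v)
  | .ex α, v, h => by
      simp only [nodeSem] at h; obtain ⟨w, hw⟩ := h
      exact (memP G hwf α v w hw).1
  | .exEq α β, v, h => by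
      simp only [nodeSem] at h; obtain ⟨w, u, h1, _, _⟩ := h
      exact (memP G hwf α v w h1).1
  | .exNe α β, v, h => by
      simp only [nodeSem] at h; obtain ⟨w, u, h1, _, _⟩ := h
      exact (memP G hwf α v w h1).1
end

section pres

variable {σe σn : Type} (H H' : DataGraph σe σn) (S : Set σn) (r : σn → σn)

theorem eqc_iff (hD : ∀ v, H'.D v = r (H.D v)) (hrfix : ∀ c ∈ S, r c = c)
    (hrinj : Set.InjOn r (S ∪ H.D '' H.V)) {v : ℕ} (hv : v ∈ H.V) {c : σn}
    (hc : c ∈ S) : H.D v = c ↔ H'.D v = c := by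
  rw [hD]
  constructor
  · rintro rfl; exact hrfix _ hc
  · intro h
    exact hrinj (Or.inr ⟨v, hv, rfl⟩) (Or.inl hc) (by rw [h, hrfix _ hc])

theorem eqd_iff (hD : ∀ v, H'.D v = r (H.D v))
    (hrinj : Set.InjOn r (S ∪ H.D '' H.V)) {v w : ℕ} (hv : v ∈ H.V)
    (hw : w ∈ H.V) : H.D v = H.D w ↔ H'.D v = H'.D w := by
  rw [hD, hD]
  exact ⟨fun h => by rw [h],
    fun h => hrinj (Or.inr ⟨v, hv, rfl⟩) (Or.inr ⟨w, hw, rfl⟩) h⟩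

mutual
theorem presP (hV : H'.V = H.V) (hE : H'.E = H.E) (hD : ∀ v, H'.D v = r (H.D v))
    (hrfix : ∀ c ∈ S, r c = c) (hrinj : Set.InjOn r (S ∪ H.D '' H.V))
    (hwf : ∀ e ∈ H.E, e.1 ∈ H.V ∧ e.2.2 ∈ H.V) :
    ∀ (α : PathExpr σe σn), mentionedP α ⊆ S →
      ∀ v w, pathSem H α v w ↔ pathSem H' α v w
  | .eps, _, v, w => by simp only [pathSem, hV]
  | .label a, _, v, w => by simp only [pathSem, hE]
  | .inv a, _, v, w => by simp only [pathSem, hE]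
  | .test ν, hm, v, w => by
      simp only [pathSem]
      rw [presN hV hE hD hrfix hrinj hwf ν hm v]
  | .concat α β, hm, v, w => by
      simp only [pathSem, mentionedP] at *
      exact exists_congr fun u => and_congr
        (presP hV hE hD hrfix hrinj hwf α (fun _ h => hm (Or.inl h)) v u)
        (presP hV hE hD hrfix hrinj hwf β (fun _ h => hm (Or.inr h)) u w)
  | .union α β, hm, v, w => by
      simp only [pathSem, mentionedP] at *
      rw [presP hV hE hD hrfix hrinj hwf α (fun _ h => hm (Or.inl h)) v w,
        presP hV hE hD hrfix hrinj hwf β (fun _ h => hm (Or.inr h)) v w]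
  | .inter α β, hm, v, w => by
      simp only [pathSem, mentionedP] at *
      rw [presP hV hE hD hrfix hrinj hwf α (fun _ h => hm (Or.inl h)) v w,
        presP hV hE hD hrfix hrinj hwf β (fun _ h => hm (Or.inr h)) v w]
  | .star α, hm, v, w => by
      simp only [pathSem, mentionedP] at *
      have key : (fun x y => pathSem H α x y) = (fun x y => pathSem H' α x y) := by
        funext x y; exact propext (presP hV hE hD hrfix hrinj hwf α hm x y)
      rw [hV, key]

theorem presN (hV : H'.V = H.V) (hE : H'.E = H.E) (hD : ∀ v, H'.D v = r (H.D v))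
    (hrfix : ∀ c ∈ S, r c = c) (hrinj : Set.InjOn r (S ∪ H.D '' H.V))
    (hwf : ∀ e ∈ H.E, e.1 ∈ H.V ∧ e.2.2 ∈ H.V) :
    ∀ (ν : NodeExpr σe σn), mentionedN ν ⊆ S →
      ∀ v, nodeSem H ν v ↔ nodeSem H' ν v
  | .eq c, hm, v => by
      simp only [nodeSem, mentionedN, Set.singleton_subset_iff] at *
      constructor
      · rintro ⟨hv, h⟩
        exact ⟨hV ▸ hv, (eqc_iff H H' S r hD hrfix hrinj hv hm).mp h⟩
      · rintro ⟨hv, h⟩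
        rw [hV] at hv
        exact ⟨hv, (eqc_iff H H' S r hD hrfix hrinj hv hm).mpr h⟩
  | .ne c, hm, v => by
      simp only [nodeSem, mentionedN, Set.singleton_subset_iff] at *
      constructor
      · rintro ⟨hv, h⟩
        exact ⟨hV ▸ hv, fun hc =>
          h ((eqc_iff H H' S r hD hrfix hrinj hv hm).mpr hc)⟩
      · rintro ⟨hv, h⟩
        rw [hV] at hv
        exact ⟨hv, fun hc =>
          h ((eqc_iff H H' S r hD hrfix hrinj hv hm).mp hc)⟩
  | .and ν ν', hm, v => by
      simp only [nodeSem, mentionedN] at *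
      rw [presN hV hE hD hrfix hrinj hwf ν (fun _ h => hm (Or.inl h)) v,
        presN hV hE hD hrfix hrinj hwf ν' (fun _ h => hm (Or.inr h)) v]
  | .or ν ν', hm, v => by
      simp only [nodeSem, mentionedN] at *
      rw [presN hV hE hD hrfix hrinj hwf ν (fun _ h => hm (Or.inl h)) v,
        presN hV hE hD hrfix hrinj hwf ν' (fun _ h => hm (Or.inr h)) v]
  | .ex α, hm, v => by
      simp only [nodeSem, mentionedN] at *
      exact exists_congr fun w =>
        presP hV hE hD hrfix hrinj hwf α hm v w
  | .exEq α β, hm, v => by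
      simp only [nodeSem, mentionedN] at *
      have hwf' : ∀ e ∈ H'.E, e.1 ∈ H'.V ∧ e.2.2 ∈ H'.V := by
        rw [hE, hV]; exact hwf
      constructor
      · rintro ⟨w, u, h1, h2, h3⟩
        have hw := (memP H hwf α v w h1).2
        have hu := (memP H hwf β v u h2).2
        exact ⟨w, u,
          (presP hV hE hD hrfix hrinj hwf α (fun _ h => hm (Or.inl h)) v w).mp h1,
          (presP hV hE hD hrfix hrinj hwf β (fun _ h => hm (Or.inr h)) v u).mp h2,
          (eqd_iff H H' S r hD hrinj hw hu).mp h3⟩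
      · rintro ⟨w, u, h1, h2, h3⟩
        have hw : w ∈ H.V := hV ▸ (memP H' hwf' α v w h1).2
        have hu : u ∈ H.V := hV ▸ (memP H' hwf' β v u h2).2
        exact ⟨w, u,
          (presP hV hE hD hrfix hrinj hwf α (fun _ h => hm (Or.inl h)) v w).mpr h1,
          (presP hV hE hD hrfix hrinj hwf β (fun _ h => hm (Or.inr h)) v u).mpr h2,
          (eqd_iff H H' S r hD hrinj hw hu).mpr h3⟩
  | .exNe α β, hm, v => by
      simp only [nodeSem, mentionedN] at *
      have hwf' : ∀ e ∈ H'.E, e.1 ∈ H'.V ∧ e.2.2 ∈ H'.V := by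
        rw [hE, hV]; exact hwf
      constructor
      · rintro ⟨w, u, h1, h2, h3⟩
        have hw := (memP H hwf α v w h1).2
        have hu := (memP H hwf β v u h2).2
        exact ⟨w, u,
          (presP hV hE hD hrfix hrinj hwf α (fun _ h => hm (Or.inl h)) v w).mp h1,
          (presP hV hE hD hrfix hrinj hwf β (fun _ h => hm (Or.inr h)) v u).mp h2,
          fun hc => h3 ((eqd_iff H H' S r hD hrinj hw hu).mpr hc)⟩
      · rintro ⟨w, u, h1, h2, h3⟩
        have hw : w ∈ H.V := hV ▸ (memP H' hwf' α v w h1).2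
        have hu : u ∈ H.V := hV ▸ (memP H' hwf' β v u h2).2
        exact ⟨w, u,
          (presP hV hE hD hrfix hrinj hwf α (fun _ h => hm (Or.inl h)) v w).mpr h1,
          (presP hV hE hD hrfix hrinj hwf β (fun _ h => hm (Or.inr h)) v u).mpr h2,
          fun hc => h3 ((eqd_iff H H' S r hD hrinj hw hu).mp hc)⟩
end

end pres

/-- Renaming the data values of `H` that are not mentioned in `η` by an
injective replacement `r` into a set `A` of fresh values (disjoint from the values mentioned
in `η`, with `|A| = n` for `H` an `n`-node data-graph) preserves the semantics of every
subexpression of `η`; in particular, if `H` satisfies `η` at every node, then so does the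
renamed data-graph `H'`, and `H'` uses only data values from `Σ_n^η ∪ A`. -/
theorem stmt_10 {σe σn : Type} (G H : DataGraph σe σn) (η : NodeExpr σe σn)
    (n : ℕ) (hVfin : G.V.Finite) (hVcard : hVfin.toFinset.card = n)
    (A : Set σn) (hAfin : A.Finite) (hAcard : hAfin.toFinset.card = n)
    (hAdisj : Disjoint A (mentionedN η))
    (hHV : H.V = G.V) (hHE : H.E = G.E)
    (hwf : ∀ e ∈ H.E, e.1 ∈ H.V ∧ e.2.2 ∈ H.V)
    (r : σn → σn)
    (hrfix : ∀ c ∈ mentionedN η, r c = c)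
    (hrA : ∀ v ∈ H.V, H.D v ∉ mentionedN η → r (H.D v) ∈ A)
    (hrinj : Set.InjOn r (mentionedN η ∪ H.D '' H.V))
    (H' : DataGraph σe σn) (hH' : H' = ⟨H.V, H.E, fun v => r (H.D v)⟩) :
    (∀ ν : NodeExpr σe σn, mentionedN ν ⊆ mentionedN η →
        ∀ v, nodeSem H ν v ↔ nodeSem H' ν v) ∧
    (∀ α : PathExpr σe σn, mentionedP α ⊆ mentionedN η →
        ∀ v w, pathSem H α v w ↔ pathSem H' α v w) ∧
    ((∀ v ∈ H.V, nodeSem H η v) →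
        (∀ v ∈ H'.V, nodeSem H' η v) ∧ ∀ v ∈ H'.V, H'.D v ∈ mentionedN η ∪ A) := by
  subst hH'
  have hV : (DataGraph.mk H.V H.E (fun v => r (H.D v))).V = H.V := rfl
  have hE : (DataGraph.mk H.V H.E (fun v => r (H.D v))).E = H.E := rfl
  have hD : ∀ v, (DataGraph.mk H.V H.E (fun v => r (H.D v))).D v = r (H.D v) :=
    fun _ => rfl
  refine ⟨fun ν hm v => presN H _ (mentionedN η) r hV hE hD hrfix hrinj hwf ν hm v,
    fun α hm v w => presP H _ (mentionedN η) r hV hE hD hrfix hrinj hwf α hm v w,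
    fun hsat => ⟨fun v hv => ?_, fun v hv => ?_⟩⟩
  · exact (presN H _ (mentionedN η) r hV hE hD hrfix hrinj hwf η
      (fun _ h => h) v).mp (hsat v hv)
  · by_cases hc : H.D v ∈ mentionedN η
    · exact Or.inl (by simpa [hrfix _ hc] using hc)
    · exact Or.inr (hrA v hv hc)
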